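/- arXiv:2003.11460 — 4 statements merged into one kernel-verified Lean document; each statement's English description precedes it below -/
import Mathlib

section
/- For every r ∈ [0,1) and every θ ∈ [0,π), the integral J(θ) = ∫₀^θ (1-r²)³/(1+r²-2r·cos φ)² dφ equals 2r(1-r²)·sin θ/(1+r²-2r·cos θ) + 2(1+r²)·arctan((1+r)·tan(θ/2)/(1-r)). Moreover ∫₀^π (1-r²)³/(1+r²-2r·cos φ)² dφ = π(1+r²). -/
/-!
Differentiating shows that `2r(1-r²) sin t / D(t) + 2(1+r²) arctan((1+r)/(1-r) · tan(t/2))`, with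
`D(t) = 1 + r² - 2r cos t`, is a primitive of the integrand on `(-π, π)`; the half-angle form
`D = (1-r)² cos²(t/2) + (1+r)² sin²(t/2)` makes the arctan term tractable. At `t = π` the primitive
breaks down, so the integral over `[0, π]` is split at `π/2`: the substitution `φ ↦ π - φ` turns the
second half into the first half with `r` replaced by `-r`, and the two arctan values add up to `π/2`.
-/

open Real

lemma one_add_sq_sub_two_mul_cos_pos {r : ℝ} (hr : |r| < 1) (θ : ℝ) :
    0 < 1 + r^2 - 2*r*cos θ := by
  have hrc : r * cos θ ≤ |r| := by
    calc r * cos θ ≤ |r * cos θ| := le_abs_self _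
      _ ≤ |r| := by rw [abs_mul]; exact mul_le_of_le_one_right (abs_nonneg r) (abs_cos_le_one θ)
  nlinarith [sq_abs r, sq_pos_of_pos (sub_pos.2 hr)]

lemma one_add_sq_sub_two_mul_cos_eq_half_angle (r θ : ℝ) :
    1 + r^2 - 2*r*cos θ = (1-r)^2 * cos (θ/2)^2 + (1+r)^2 * sin (θ/2)^2 := by
  have hcos : cos θ = 2 * cos (θ/2)^2 - 1 := by
    rw [← cos_two_mul]; ring_nf
  linear_combination (-1 - r^2 - 2*r) * sin_sq_add_cos_sq (θ/2) - 2*r*hcos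

lemma hasDerivAt_sin_div_one_add_sq_sub_two_mul_cos {r θ : ℝ}
    (hD : 1 + r^2 - 2*r*cos θ ≠ 0) :
    HasDerivAt (fun t => sin t / (1 + r^2 - 2*r*cos t))
      (((1 + r^2) * cos θ - 2*r) / (1 + r^2 - 2*r*cos θ)^2) θ := by
  have hden : HasDerivAt (fun t => 1 + r^2 - 2*r*cos t) (2*r*sin θ) θ := by
    simpa using ((hasDerivAt_cos θ).const_mul (2*r)).const_sub (1 + r^2)
  refine ((hasDerivAt_sin θ).div hden hD).congr_deriv ?_
  congr 1
  linear_combination (-2*r) * sin_sq_add_cos_sq θ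

lemma hasDerivAt_arctan_mul_tan_half {r θ : ℝ} (hr : r ≠ 1) (hθ : cos (θ/2) ≠ 0) :
    HasDerivAt (fun t => arctan ((1 + r) * tan (t/2) / (1 - r)))
      ((1 - r^2) / (2 * (1 + r^2 - 2*r*cos θ))) θ := by
  have hr' : 1 - r ≠ 0 := sub_ne_zero.2 hr.symm
  have htan : HasDerivAt (fun t : ℝ => tan (t/2)) (1 / cos (θ/2)^2 * (1/2)) θ :=
    HasDerivAt.comp (h₂ := tan) θ (hasDerivAt_tan hθ) ((hasDerivAt_id' θ).div_const 2)
  refine ((htan.const_mul (1 + r)).div_const (1 - r)).arctan.congr_deriv ?_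
  have hD : (1-r)^2 * cos (θ/2)^2 + (1+r)^2 * sin (θ/2)^2 ≠ 0 := by positivity
  rw [one_add_sq_sub_two_mul_cos_eq_half_angle, tan_eq_sin_div_cos]
  field_simp
  ring

-- The integrand `(1-r²)³/(1 + r² - 2r cos φ)²` is `(1-r²)` times the square of the Poisson kernel.
lemma hasDerivAt_poissonKernel_sq_primitive {r θ : ℝ} (hr : |r| < 1) (hθ : cos (θ/2) ≠ 0) :
    HasDerivAt (fun t => 2*r*(1 - r^2)*sin t / (1 + r^2 - 2*r*cos t)
        + 2*(1 + r^2) * arctan ((1 + r) * tan (t/2) / (1 - r)))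
      ((1 - r^2)^3 / (1 + r^2 - 2*r*cos θ)^2) θ := by
  have hD := (one_add_sq_sub_two_mul_cos_pos hr θ).ne'
  have hr1 : r ≠ 1 := fun h => by simp [h] at hr
  have h := ((hasDerivAt_sin_div_one_add_sq_sub_two_mul_cos hD).const_mul (2*r*(1 - r^2))).add
    ((hasDerivAt_arctan_mul_tan_half hr1 hθ).const_mul (2*(1 + r^2)))
  simp only [← mul_div_assoc] at h
  refine h.congr_deriv ?_
  field_simp
  ring

lemma continuous_poissonKernel_sq {r : ℝ} (hr : |r| < 1) :
    Continuous fun φ => (1 - r^2)^3 / (1 + r^2 - 2*r*cos φ)^2 :=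
  continuous_const.div (by fun_prop) fun φ => pow_ne_zero 2 (one_add_sq_sub_two_mul_cos_pos hr φ).ne'

lemma integral_poissonKernel_sq {r θ : ℝ} (hr : |r| < 1) (hθ : θ ∈ Set.Ioo (-π) π) :
    (∫ φ in (0:ℝ)..θ, (1 - r^2)^3 / (1 + r^2 - 2*r*cos φ)^2)
      = 2*r*(1 - r^2)*sin θ / (1 + r^2 - 2*r*cos θ)
        + 2*(1 + r^2) * arctan ((1 + r) * tan (θ/2) / (1 - r)) := by
  have h0 : (0:ℝ) ∈ Set.Ioo (-π) π := ⟨by linarith [pi_pos], pi_pos⟩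
  have hcos : ∀ x ∈ Set.uIcc 0 θ, cos (x/2) ≠ 0 := fun x hx => by
    obtain ⟨hx₁, hx₂⟩ := Set.ordConnected_Ioo.uIcc_subset h0 hθ hx
    exact (cos_pos_of_mem_Ioo ⟨by linarith, by linarith⟩).ne'
  rw [intervalIntegral.integral_eq_sub_of_hasDerivAt
    (fun x hx => hasDerivAt_poissonKernel_sq_primitive hr (hcos x hx))
    ((continuous_poissonKernel_sq hr).intervalIntegrable 0 θ)]
  simp

lemma integral_poissonKernel_sq_pi_div_two_pi (r : ℝ) :
    (∫ φ in (π/2)..π, (1 - r^2)^3 / (1 + r^2 - 2*r*cos φ)^2)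
      = ∫ φ in (0:ℝ)..(π/2), (1 - (-r)^2)^3 / (1 + (-r)^2 - 2*(-r)*cos φ)^2 := by
  have := intervalIntegral.integral_comp_sub_left
    (fun φ => (1 - r^2)^3 / (1 + r^2 - 2*r*cos φ)^2) (a := 0) (b := π/2) π
  rw [sub_zero, sub_half] at this
  rw [← this]
  simp only [cos_pi_sub]
  ring_nf

lemma integral_poissonKernel_sq_zero_pi {r : ℝ} (hr : |r| < 1) :
    (∫ φ in (0:ℝ)..π, (1 - r^2)^3 / (1 + r^2 - 2*r*cos φ)^2) = π * (1 + r^2) := by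
  have hπ : π/2 ∈ Set.Ioo (-π) π := ⟨by linarith [pi_pos], by linarith [pi_pos]⟩
  rw [← intervalIntegral.integral_add_adjacent_intervals (b := π/2)
      ((continuous_poissonKernel_sq hr).intervalIntegrable _ _)
      ((continuous_poissonKernel_sq hr).intervalIntegrable _ _),
    integral_poissonKernel_sq_pi_div_two_pi, integral_poissonKernel_sq hr hπ,
    integral_poissonKernel_sq (by rwa [abs_neg]) hπ]
  obtain ⟨hr₁, hr₂⟩ := abs_lt.mp hr
  have hq : 0 < (1 + r) / (1 - r) := div_pos (by linarith) (by linarith)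
  have harctan : arctan ((1 - r) / (1 + r)) = π/2 - arctan ((1 + r) / (1 - r)) := by
    rw [← inv_div, arctan_inv_of_pos hq]
  rw [show π/2/2 = π/4 by ring, tan_pi_div_four, sin_pi_div_two, cos_pi_div_two,
    show (1 + -r) * 1 / (1 - -r) = (1 - r) / (1 + r) by ring, harctan, mul_one]
  field_simp
  ring

theorem stmt0 (r : ℝ) (hr : r ∈ Set.Ico (0:ℝ) 1) :
    (∀ θ ∈ Set.Ico (0:ℝ) Real.pi,
      (∫ φ in (0:ℝ)..θ, (1 - r^2)^3 / (1 + r^2 - 2*r*Real.cos φ)^2)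
        = 2*r*(1 - r^2)*Real.sin θ / (1 + r^2 - 2*r*Real.cos θ)
          + 2*(1 + r^2) * Real.arctan ((1 + r) * Real.tan (θ/2) / (1 - r)))
    ∧ (∫ φ in (0:ℝ)..Real.pi, (1 - r^2)^3 / (1 + r^2 - 2*r*Real.cos φ)^2)
        = Real.pi * (1 + r^2) := by
  have hr' : |r| < 1 := abs_lt.2 ⟨by linarith [hr.1], hr.2⟩
  exact ⟨fun θ hθ => integral_poissonKernel_sq hr' ⟨by linarith [hθ.1, pi_pos], hθ.2⟩,
    integral_poissonKernel_sq_zero_pi hr'⟩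
end

section
/- Let u : 𝔻 → ℂ be given by u(z) = (1/2π)∫₀^{2π} K₂(z·e^{-iθ})·u*(e^{iθ}) dθ for some measurable u* : 𝕋 → ℂ with |u*(e^{iθ})| ≤ 1 for all θ. Then |u_z(0)| + |u_{z̄}(0)| ≤ 4/π. -/
open Real MeasureTheory

/-- The kernel `K₂(z) = (1/2)·(1-|z|²)³/|1-z|⁴`. -/
noncomputable def K2ker (z : ℂ) : ℝ :=
  (1 - ‖z‖ ^ 2) ^ 3 / (2 * ‖1 - z‖ ^ 4)

/-- The harmonic Poisson kernel `P(z) = (1-|z|²)/|1-z|²`. -/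
noncomputable def Pker (z : ℂ) : ℝ :=
  (1 - ‖z‖ ^ 2) / ‖1 - z‖ ^ 2

/-- The biharmonic Green function `G(z,w)`. -/
noncomputable def Gker (z w : ℂ) : ℝ :=
  ‖z - w‖ ^ 2 *
      Real.log (‖(1 - z * (starRingEnd ℂ) w) / (z - w)‖ ^ 2)
    - (1 - ‖z‖ ^ 2) * (1 - ‖w‖ ^ 2)

/-- Poisson integral `P[φ](z)`. -/
noncomputable def Pint (φ : ℂ → ℂ) (z : ℂ) : ℂ :=
  (1 / (2 * Real.pi)) *
    ∫ θ in (0:ℝ)..(2 * Real.pi),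
      (Pker (z * Complex.exp (-(θ:ℂ) * Complex.I)) : ℂ) * φ (Complex.exp ((θ:ℂ) * Complex.I))

/-- The integral operator `K₂[φ](z)`. -/
noncomputable def K2int (φ : ℂ → ℂ) (z : ℂ) : ℂ :=
  (1 / (2 * Real.pi)) *
    ∫ θ in (0:ℝ)..(2 * Real.pi),
      (K2ker (z * Complex.exp (-(θ:ℂ) * Complex.I)) : ℂ) * φ (Complex.exp ((θ:ℂ) * Complex.I))

/-- The Green potential `G[g](z) = (1/16)∫_𝔻 G(z,w) g(w) dA(w)`. -/
noncomputable def Gint (g : ℂ → ℂ) (z : ℂ) : ℂ :=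
  (1 / 16) * ∫ w in Metric.ball (0:ℂ) 1, (Gker z w : ℂ) * g w

/-- Wirtinger derivative `f_z = (1/2)(f_x - i f_y)`. -/
noncomputable def wderivZ (f : ℂ → ℂ) (z : ℂ) : ℂ :=
  (1 / 2) * (fderiv ℝ f z 1 - Complex.I * fderiv ℝ f z Complex.I)

/-- Wirtinger derivative `f_{z̄} = (1/2)(f_x + i f_y)`. -/
noncomputable def wderivZbar (f : ℂ → ℂ) (z : ℂ) : ℂ :=
  (1 / 2) * (fderiv ℝ f z 1 + Complex.I * fderiv ℝ f z Complex.I)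

/-- Sup norm over the unit circle. -/
noncomputable def normInfCircle (f : ℂ → ℂ) : ℝ :=
  sSup ((fun ζ => ‖f ζ‖) '' {ζ : ℂ | ‖ζ‖ = 1})

/-- Sup norm over the unit disk. -/
noncomputable def normInfDisk (g : ℂ → ℂ) : ℝ :=
  sSup ((fun ζ => ‖g ζ‖) '' Metric.ball (0:ℂ) 1)

/-- The explicit solution `Φ` of the inhomogeneous biharmonic Dirichlet problem. -/
noncomputable def solPhi (f h g : ℂ → ℂ) (z : ℂ) : ℂ :=
  (((1 - ‖z‖ ^ 2) / 2 : ℝ) : ℂ) * Pint (fun ζ => f ζ + h ζ) z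
    + K2int f z - Gint g z

/-!
The kernel `K₂` has strict derivative `2 Re` at the origin, so differentiating under the
integral sign gives `u_z(0) = (1/2π) ∫ e^{-iθ} u*` and `u_{z̄}(0) = (1/2π) ∫ e^{iθ} u*`.
Rotating these two numbers onto the positive axis by unimodular factors `α`, `β` turns the sum
of their moduli into `(1/2π) |∫ (α e^{-iθ} + β e^{iθ}) u*|`, which is at most
`(1/2π) ∫ |α e^{-iθ} + β e^{iθ}| = (1/2π) ∫ 2 |cos (θ + d)| = 8 / 2π`.
-/

open ComplexConjugate
open Complex (I)

theorem hasStrictFDerivAt_norm_one_sub_sq_zero :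
    HasStrictFDerivAt (fun z : ℂ => ‖1 - z‖ ^ 2) (-(2:ℝ) • Complex.reCLM) 0 := by
  refine ((hasStrictFDerivAt_norm_sq ((1:ℂ) - 0)).comp (0:ℂ)
    ((hasStrictFDerivAt_id (0:ℂ)).const_sub (1:ℂ))).congr_fderiv ?_
  ext v
  simp

theorem hasStrictFDerivAt_K2ker_zero : HasStrictFDerivAt K2ker ((2:ℝ) • Complex.reCLM) 0 := by
  have hnum := ((by simpa using hasStrictFDerivAt_norm_sq (0:ℂ) :
    HasStrictFDerivAt (fun z : ℂ => ‖z‖ ^ 2) (0 : ℂ →L[ℝ] ℝ) 0).const_sub 1).pow 3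
  have hden := (hasStrictDerivAt_inv (by norm_num : (2:ℝ) * (‖(1:ℂ) - 0‖ ^ 2) ^ 2 ≠ 0)
    ).comp_hasStrictFDerivAt (0:ℂ) ((hasStrictFDerivAt_norm_one_sub_sq_zero.pow 2).const_mul 2)
  have hK : K2ker = fun z => (1 - ‖z‖ ^ 2) ^ 3 * (2 * (‖1 - z‖ ^ 2) ^ 2)⁻¹ := by
    funext z
    rw [K2ker, div_eq_mul_inv]
    ring
  rw [hK]
  refine (hnum.mul hden).congr_fderiv ?_
  ext v
  simp
  ring

open Metric in
/-- Strict differentiability makes `K` Lipschitz near `0`, which dominates the difference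
quotients of the integrand. -/
theorem hasFDerivAt_intervalIntegral_smul_comp_mul {K : ℂ → ℝ} {K' : ℂ →L[ℝ] ℝ}
    (hK : HasStrictFDerivAt K K' 0) {c s : ℝ → ℂ} (hc : Continuous c) (hc1 : ∀ θ, ‖c θ‖ ≤ 1)
    {a b : ℝ} (hs : IntervalIntegrable s volume a b) :
    HasFDerivAt (fun z => ∫ θ in a..b, K (z * c θ) • s θ)
      (∫ θ in a..b, (K'.comp (ContinuousLinearMap.mul ℝ ℂ (c θ))).smulRight (s θ)) 0 := by
  obtain ⟨L, t, ht, hLip⟩ := hK.exists_lipschitzOnWith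
  obtain ⟨r, hr, hrt⟩ := Metric.mem_nhds_iff.mp ht
  have hmem : ∀ {z : ℂ}, z ∈ ball (0:ℂ) r → ∀ θ, z * c θ ∈ t := fun hz θ => hrt <| by
    simpa using (norm_mul_le_of_le le_rfl (hc1 θ)).trans_lt (by simpa using hz)
  have hs_meas := hs.def'.aestronglyMeasurable
  refine (intervalIntegral.hasFDerivAt_integral_of_dominated_loc_of_lip (ball_mem_nhds 0 hr)
    (bound := fun θ => L * ‖s θ‖) ?_ (by simp only [zero_mul]; exact hs.smul (K 0)) ?_ ?_
    (hs.norm.const_mul _) ?_).2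
  · filter_upwards [ball_mem_nhds (0:ℂ) hr] with z hz
    exact ((hLip.continuousOn.comp_continuous (continuous_const.mul hc)
      (hmem hz)).aestronglyMeasurable).smul hs_meas
  · have hG : Continuous fun θ => K'.comp (ContinuousLinearMap.mul ℝ ℂ (c θ)) :=
      (ContinuousLinearMap.compL ℝ ℂ ℂ ℝ K').continuous.comp
        ((ContinuousLinearMap.mul ℝ ℂ).continuous.comp hc)
    exact (ContinuousLinearMap.smulRightL ℝ ℂ ℂ).aestronglyMeasurable_comp₂
      hG.aestronglyMeasurable hs_meas
  · refine .of_forall fun θ _ => lipschitzOnWith_iff_norm_sub_le.mpr fun x hx y hy => ?_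
    have hK_xy := lipschitzOnWith_iff_norm_sub_le.mp hLip (hmem hx θ) (hmem hy θ)
    calc ‖K (x * c θ) • s θ - K (y * c θ) • s θ‖
        = ‖K (x * c θ) - K (y * c θ)‖ * ‖s θ‖ := by rw [← sub_smul, norm_smul]
      _ ≤ L * ‖x * c θ - y * c θ‖ * ‖s θ‖ := by gcongr
      _ ≤ L * ‖x - y‖ * ‖s θ‖ := by
        gcongr
        rw [← sub_mul, norm_mul]
        exact mul_le_of_le_one_right (norm_nonneg _) (hc1 θ)
      _ = Real.nnabs (L * ‖s θ‖) * ‖x - y‖ := by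
        rw [Real.coe_nnabs, abs_of_nonneg (by positivity)]
        ring
  · refine .of_forall fun θ _ => ?_
    have hmul : HasFDerivAt (fun z : ℂ => z * c θ) (ContinuousLinearMap.mul ℝ ℂ (c θ)) 0 :=
      (ContinuousLinearMap.mul ℝ ℂ (c θ)).hasFDerivAt.congr_of_eventuallyEq
        (.of_forall fun z => by simp [mul_comm])
    exact ((zero_mul (c θ) ▸ hK.hasFDerivAt).comp 0 hmul).smul_const (s θ)

/-- Here the derivative is `v ↦ 2 Re (c v) s = c s v + c̄ s v̄`. -/
theorem hasFDerivAt_intervalIntegral_smul_comp_mul_of_two_re {K : ℂ → ℝ}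
    (hK : HasStrictFDerivAt K ((2:ℝ) • Complex.reCLM) 0) {c s : ℝ → ℂ} (hc : Continuous c)
    (hc1 : ∀ θ, ‖c θ‖ ≤ 1) {a b : ℝ} (hs : IntervalIntegrable s volume a b) :
    HasFDerivAt (fun z => ∫ θ in a..b, K (z * c θ) • s θ)
      ((∫ θ in a..b, c θ * s θ) • ContinuousLinearMap.id ℝ ℂ
        + (∫ θ in a..b, conj (c θ) * s θ) • (Complex.conjCLE : ℂ →L[ℝ] ℂ)) 0 := by
  convert hasFDerivAt_intervalIntegral_smul_comp_mul hK hc hc1 hs using 1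
  have hint : ∀ f : ℝ → ℂ, Continuous f → ∀ C : ℂ →L[ℝ] ℂ,
      IntervalIntegrable (fun θ => (f θ * s θ) • C) volume a b := fun f hf C =>
    have h := hs.continuousOn_mul hf.continuousOn
    ⟨Integrable.smul_const h.1 C, Integrable.smul_const h.2 C⟩
  rw [intervalIntegral.integral_congr (g := fun θ => (c θ * s θ) • ContinuousLinearMap.id ℝ ℂ
      + (conj (c θ) * s θ) • (Complex.conjCLE : ℂ →L[ℝ] ℂ)) fun θ _ => ?_,
    intervalIntegral.integral_add (hint c hc _)
      (hint (fun θ => conj (c θ)) (Complex.continuous_conj.comp hc) _),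
    intervalIntegral.integral_smul_const, intervalIntegral.integral_smul_const]
  ext v
  apply Complex.ext <;> simp <;> ring

theorem wderivZ_eq_of_hasFDerivAt {f : ℂ → ℂ} {z a b : ℂ}
    (h : HasFDerivAt f
      (a • ContinuousLinearMap.id ℝ ℂ + b • (Complex.conjCLE : ℂ →L[ℝ] ℂ)) z) :
    wderivZ f z = a := by
  simp [wderivZ, h.fderiv]
  linear_combination (b / 2 - a / 2) * Complex.I_sq

theorem wderivZbar_eq_of_hasFDerivAt {f : ℂ → ℂ} {z a b : ℂ}
    (h : HasFDerivAt f
      (a • ContinuousLinearMap.id ℝ ℂ + b • (Complex.conjCLE : ℂ →L[ℝ] ℂ)) z) :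
    wderivZbar f z = b := by
  simp [wderivZbar, h.fderiv]
  linear_combination (a / 2 - b / 2) * Complex.I_sq

theorem integral_abs_cos_add (d : ℝ) : ∫ θ in (0:ℝ)..(2 * π), |Real.cos (θ + d)| = 4 := by
  have hper : Function.Periodic (fun θ => |Real.cos θ|) (2 * π) := fun θ => by
    simp [Real.cos_add_two_pi]
  have hint : ∀ a b : ℝ, IntervalIntegrable (fun θ => |Real.cos θ|) volume a b := fun a b =>
    Real.continuous_cos.abs.intervalIntegrable a b
  have hpos : ∫ θ in (-(π / 2))..(π / 2), |Real.cos θ| = 2 := by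
    rw [intervalIntegral.integral_congr fun θ hθ => abs_of_nonneg (Real.cos_nonneg_of_mem_Icc
      (by simpa [Set.uIcc_of_le (by linarith [pi_pos] : -(π / 2) ≤ π / 2)] using hθ)),
      integral_cos]
    norm_num
  have hneg : ∫ θ in (π / 2)..(3 * π / 2), |Real.cos θ| = 2 := by
    have hle : π / 2 ≤ 3 * π / 2 := by linarith [pi_pos]
    rw [intervalIntegral.integral_congr fun θ hθ => abs_of_nonpos
      (Real.cos_nonpos_of_pi_div_two_le_of_le (Set.uIcc_of_le hle ▸ hθ).1
        (by linarith [(Set.uIcc_of_le hle ▸ hθ).2])),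
      intervalIntegral.integral_neg, integral_cos]
    have : Real.sin (3 * π / 2) = -1 := by
      rw [show 3 * π / 2 = π / 2 + π by ring, Real.sin_add_pi, Real.sin_pi_div_two]
    norm_num [this]
  rw [intervalIntegral.integral_comp_add_right (fun θ => |Real.cos θ|), zero_add, add_comm _ d,
    hper.intervalIntegral_add_eq d (-(π / 2)),
    ← intervalIntegral.integral_add_adjacent_intervals (hint _ (π / 2)) (hint _ _), hpos,
    show -(π / 2) + 2 * π = 3 * π / 2 by ring, hneg]
  norm_num

theorem norm_exp_mul_exp_neg_add_exp_mul_exp (a b θ : ℝ) :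
    ‖Complex.exp (a * I) * Complex.exp (-θ * I) + Complex.exp (b * I) * Complex.exp (θ * I)‖
      = 2 * |Real.cos (θ + (b - a) / 2)| := by
  have h : Complex.exp (a * I) * Complex.exp (-θ * I) + Complex.exp (b * I) * Complex.exp (θ * I)
      = Complex.exp (((a + b) / 2 : ℝ) * I) * (2 * Complex.cos (θ + (b - a) / 2 : ℝ)) := by
    rw [Complex.two_cos, mul_add, ← Complex.exp_add, ← Complex.exp_add, ← Complex.exp_add,
      ← Complex.exp_add]
    push_cast
    ring_nf
  rw [h, norm_mul, Complex.norm_exp_ofReal_mul_I, one_mul, norm_mul, ← Complex.ofReal_cos,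
    Complex.norm_real, Complex.norm_two, Real.norm_eq_abs]

theorem norm_add_norm_le_of_forall_exp_mul_add_le {A B : ℂ} {C : ℝ}
    (h : ∀ a b : ℝ, ‖Complex.exp (a * I) * A + Complex.exp (b * I) * B‖ ≤ C) :
    ‖A‖ + ‖B‖ ≤ C := by
  have hrot : ∀ z : ℂ, Complex.exp ((-Complex.arg z : ℝ) * I) * z = ‖z‖ := fun z => by
    conv_lhs => rw [← Complex.norm_mul_exp_arg_mul_I z]
    rw [mul_left_comm, ← Complex.exp_add]
    push_cast
    simp
  have hAB := h (-A.arg) (-B.arg)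
  rwa [hrot A, hrot B, ← Complex.ofReal_add, Complex.norm_real,
    Real.norm_of_nonneg (by positivity)] at hAB

theorem norm_add_norm_intervalIntegral_exp_mul_le {s : ℝ → ℂ}
    (hs : IntervalIntegrable s volume 0 (2 * π)) (hs1 : ∀ θ, ‖s θ‖ ≤ 1) :
    ‖∫ θ in (0:ℝ)..(2 * π), Complex.exp (-θ * I) * s θ‖
      + ‖∫ θ in (0:ℝ)..(2 * π), Complex.exp (θ * I) * s θ‖ ≤ 8 := by
  refine norm_add_norm_le_of_forall_exp_mul_add_le fun a b => ?_
  set e : ℝ → ℂ := fun θ =>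
    Complex.exp (a * I) * Complex.exp (-θ * I) + Complex.exp (b * I) * Complex.exp (θ * I)
  have hint : ∀ f : ℝ → ℂ, Continuous f →
      IntervalIntegrable (fun θ => f θ * s θ) volume 0 (2 * π) :=
    fun f hf => hs.continuousOn_mul hf.continuousOn
  calc ‖Complex.exp (a * I) * (∫ θ in (0:ℝ)..(2 * π), Complex.exp (-θ * I) * s θ)
        + Complex.exp (b * I) * ∫ θ in (0:ℝ)..(2 * π), Complex.exp (θ * I) * s θ‖
      = ‖∫ θ in (0:ℝ)..(2 * π), e θ * s θ‖ := by
        rw [← intervalIntegral.integral_const_mul, ← intervalIntegral.integral_const_mul,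
          ← intervalIntegral.integral_add ((hint _ (by fun_prop)).const_mul _)
            ((hint _ (by fun_prop)).const_mul _)]
        congr 2 with θ
        ring
    _ ≤ ∫ θ in (0:ℝ)..(2 * π), ‖e θ‖ :=
        intervalIntegral.norm_integral_le_of_norm_le (by positivity)
          (.of_forall fun θ _ => by
            rw [norm_mul]
            exact mul_le_of_le_one_right (norm_nonneg _) (hs1 θ))
          ((show Continuous e by fun_prop).norm.intervalIntegrable _ _)
    _ = 8 := by
        simp_rw [e, norm_exp_mul_exp_neg_add_exp_mul_exp]
        rw [intervalIntegral.integral_const_mul, integral_abs_cos_add]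
        norm_num

/-- Gradient estimate at the origin for `T₂`-harmonic functions (Theorem 1.2, (1.5)). -/
theorem stmt5 (u ustar : ℂ → ℂ) (hmeas : Measurable ustar)
    (hbd : ∀ θ : ℝ, ‖ustar (Complex.exp ((θ:ℂ) * Complex.I))‖ ≤ 1)
    (hu : ∀ z : ℂ, ‖z‖ < 1 →
      u z = (1 / (2 * Real.pi)) *
        ∫ θ in (0:ℝ)..(2 * Real.pi),
          (K2ker (z * Complex.exp (-(θ:ℂ) * Complex.I)) : ℂ) *
            ustar (Complex.exp ((θ:ℂ) * Complex.I))) :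
    ‖wderivZ u 0‖ + ‖wderivZbar u 0‖ ≤ 4 / Real.pi := by
  set s : ℝ → ℂ := fun θ => ustar (Complex.exp (θ * I))
  have hs : IntervalIntegrable s volume 0 (2 * π) :=
    (intervalIntegrable_const (c := (1:ℝ))).mono_fun
      (hmeas.comp (by fun_prop)).aestronglyMeasurable (.of_forall fun θ => by simpa using hbd θ)
  have hconj (θ : ℝ) : conj (Complex.exp (-θ * I)) = Complex.exp (θ * I) := by
    rw [← Complex.exp_conj]
    simp
  have hK2 := hasFDerivAt_intervalIntegral_smul_comp_mul_of_two_re hasStrictFDerivAt_K2ker_zero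
    (c := fun θ => Complex.exp (-θ * I)) (by fun_prop) (fun θ => by simp [Complex.norm_exp]) hs
  have hderiv := (hK2.const_smul (1 / (2 * π : ℂ))).congr_of_eventuallyEq (f₁ := u) <| by
    filter_upwards [Metric.ball_mem_nhds (0:ℂ) one_pos] with z hz
    rw [hu z (by simpa using hz)]
    simp [Complex.real_smul, s]
  simp only [smul_add, smul_smul, hconj] at hderiv
  rw [wderivZ_eq_of_hasFDerivAt hderiv, wderivZbar_eq_of_hasFDerivAt hderiv, norm_mul, norm_mul,
    ← mul_add]
  have hnorm : ‖(1 / (2 * π) : ℂ)‖ = 1 / (2 * π) := by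
    simp [abs_of_pos pi_pos]
  calc _ ≤ 1 / (2 * π) * 8 := by
        rw [hnorm]
        gcongr
        exact norm_add_norm_intervalIntegral_exp_mul_le hs hbd
    _ = 4 / π := by field_simp; norm_num
end

section
/- Let U : 𝔻 → ℝ be defined by U(z) = (1/2π)·[∫₀^{π} K₂(z·e^{-iθ}) dθ - ∫_{π}^{2π} K₂(z·e^{-iθ}) dθ], i.e. U = K₂[χ_{𝕋⁺} - χ_{𝕋⁻}] where χ_{𝕋⁺} and χ_{𝕋⁻} are the characteristic functions of the upper and lower halves of the unit circle. Then U_z(0) = -2i/π, and consequently |U_z(0)| + |U_{z̄}(0)| = 4/π; in particular the bound ‖D_u(0)‖ ≤ 4/π for maps with the K₂ representation and boundary data of modulus at most 1 is sharp. -/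
open Real MeasureTheory

/-!
Near `0` the kernel expands as `K₂(w) = 1 + 2 Re w + O(|w|²)`, so differentiating under the
integral sign (the integrands are uniformly Lipschitz near `0`, since rotations preserve the
disk) gives `d/dz K₂(z e^{-iθ})|_{z=0} v = 2 Re(v e^{-iθ}) = 2 (v.re cos θ + v.im sin θ)`.
Over the upper half of the circle minus the lower half the cosine terms cancel and the sine
terms add up to `8`, so `dU(0) v = (4/π) Im v`, whence `U_z(0) = -2i/π` and `U_{z̄}(0) = 2i/π`.
-/

open Complex

theorem contDiffAt_K2ker {n : WithTop ℕ∞} {w : ℂ} (hw : w ≠ 1) : ContDiffAt ℝ n K2ker w := by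
  have hw' : 1 - w ≠ 0 := sub_ne_zero.mpr hw.symm
  refine ((contDiff_const.sub (contDiff_norm_sq ℝ)).pow 3).contDiffAt.div
    (contDiffAt_const.mul (((contDiffAt_norm ℝ hw').comp w
      (contDiffAt_const.sub contDiffAt_id)).pow 4)) ?_
  simpa using hw'

theorem hasFDerivAt_K2ker_zero : HasFDerivAt K2ker ((2 : ℝ) • reCLM) 0 := by
  have hsq : HasFDerivAt (fun z : ℂ => ‖z‖ ^ 2) (0 : ℂ →L[ℝ] ℝ) 0 := by
    simpa using (hasFDerivAt_id (0 : ℂ)).norm_sq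
  have hnum : HasFDerivAt (fun z : ℂ => (1 - ‖z‖ ^ 2) ^ 3) (0 : ℂ →L[ℝ] ℝ) 0 := by
    simpa using (hsq.const_sub 1).pow 3
  have hdist : HasFDerivAt (fun z : ℂ => ‖1 - z‖ ^ 2) ((-2 : ℝ) • reCLM) 0 :=
    ((hasFDerivAt_id (0 : ℂ)).const_sub 1).norm_sq.congr_fderiv (by ext v; simp)
  have hden : HasFDerivAt (fun z : ℂ => 2 * ‖1 - z‖ ^ 4) ((-8 : ℝ) • reCLM) 0 := by
    have h := (hdist.pow 2).const_mul 2
    simp only [← pow_mul] at h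
    exact h.congr_fderiv (by ext v; norm_num [← mul_assoc])
  have hinv := (hasDerivAt_inv (by norm_num : (2 * ‖(1 : ℂ) - 0‖ ^ 4 : ℝ) ≠ 0)).comp_hasFDerivAt
    (0 : ℂ) hden
  have hK : K2ker = fun z => (1 - ‖z‖ ^ 2) ^ 3 * (2 * ‖1 - z‖ ^ 4)⁻¹ := by
    funext z; rw [K2ker, div_eq_mul_inv]
  rw [hK]
  exact (hnum.mul hinv).congr_fderiv (by ext v; norm_num [← mul_assoc])

theorem exists_lipschitzOnWith_K2ker :
    ∃ (C : NNReal) (r : ℝ), 0 < r ∧ LipschitzOnWith C K2ker (Metric.ball 0 r) := by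
  obtain ⟨C, t, ht, hC⟩ := (contDiffAt_K2ker (n := 1) zero_ne_one).exists_lipschitzOnWith
  obtain ⟨r, hr, hrt⟩ := Metric.mem_nhds_iff.mp ht
  exact ⟨C, r, hr, hC.mono hrt⟩

theorem LipschitzOnWith.comp_mul_of_norm_eq_one {E : Type*} [PseudoEMetricSpace E] {f : ℂ → E}
    {C : NNReal} {r : ℝ} (hf : LipschitzOnWith C f (Metric.ball 0 r)) {u : ℂ} (hu : ‖u‖ = 1) :
    LipschitzOnWith C (fun z => f (z * u)) (Metric.ball 0 r) := by
  have hmul : LipschitzWith 1 (fun z : ℂ => z * u) :=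
    LipschitzWith.of_dist_le_mul fun z w => by simp [dist_eq_norm, ← sub_mul, hu]
  have h := hf.comp hmul.lipschitzOnWith fun z hz => by
    rw [mem_ball_zero_iff] at hz ⊢
    rwa [norm_mul, hu, mul_one]
  rwa [mul_one] at h

theorem norm_exp_neg_ofReal_mul_I (θ : ℝ) : ‖exp (-(θ : ℂ) * I)‖ = 1 := by
  simp [norm_exp]

theorem continuous_K2ker_mul_exp {x : ℂ} (hx : ‖x‖ < 1) :
    Continuous fun θ : ℝ => K2ker (x * exp (-(θ : ℂ) * I)) := by
  refine continuous_iff_continuousAt.mpr fun θ => ?_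
  have hw : x * exp (-(θ : ℂ) * I) ≠ 1 := fun h => by
    have := congrArg norm h
    rw [norm_mul, norm_exp_neg_ofReal_mul_I, mul_one, norm_one] at this
    exact hx.ne this
  exact (contDiffAt_K2ker (n := 0) hw).continuousAt.comp
    (f := fun θ : ℝ => x * exp (-(θ : ℂ) * I)) (by fun_prop)

theorem hasFDerivAt_K2ker_mul_exp (θ : ℝ) :
    HasFDerivAt (fun z => K2ker (z * exp (-(θ : ℂ) * I)))
      ((2 * Real.cos θ) • reCLM + (2 * Real.sin θ) • imCLM) 0 := by
  have hmul := (ContinuousLinearMap.mul ℝ ℂ).flip (exp (-(θ : ℂ) * I)) |>.hasFDerivAt (x := 0)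
  have hK : HasFDerivAt K2ker ((2 : ℝ) • reCLM) (0 * exp (-(θ : ℂ) * I)) := by
    simpa using hasFDerivAt_K2ker_zero
  refine (hK.comp 0 hmul).congr_fderiv ?_
  ext v
  simp [exp_re, exp_im, mul_add, mul_assoc]

theorem hasFDerivAt_integral_K2ker_mul_exp (a b : ℝ) :
    HasFDerivAt (fun z => ∫ θ in a..b, K2ker (z * exp (-(θ : ℂ) * I)))
      ((2 * (Real.sin b - Real.sin a)) • reCLM + (2 * (Real.cos a - Real.cos b)) • imCLM) 0 := by
  obtain ⟨C, r, hr, hC⟩ := exists_lipschitzOnWith_K2ker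
  have hderiv := intervalIntegral.hasFDerivAt_integral_of_dominated_loc_of_lip
    (μ := volume) (a := a) (b := b) (bound := fun _ => (C : ℝ))
    (F' := fun θ => (2 * Real.cos θ) • reCLM + (2 * Real.sin θ) • imCLM)
    (Metric.ball_mem_nhds 0 hr)
    (Filter.eventually_of_mem (Metric.ball_mem_nhds 0 one_pos) fun x hx =>
      (continuous_K2ker_mul_exp (mem_ball_zero_iff.mp hx)).aestronglyMeasurable)
    ((continuous_K2ker_mul_exp (by simp)).intervalIntegrable a b)
    (by fun_prop)
    (Filter.Eventually.of_forall fun θ _ => by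
      simpa using hC.comp_mul_of_norm_eq_one (norm_exp_neg_ofReal_mul_I θ))
    intervalIntegrable_const
    (Filter.Eventually.of_forall fun θ _ => hasFDerivAt_K2ker_mul_exp θ)
  refine hderiv.2.congr_fderiv ?_
  rw [intervalIntegral.integral_add
    ((by fun_prop : Continuous _).intervalIntegrable a b)
    ((by fun_prop : Continuous _).intervalIntegrable a b),
    intervalIntegral.integral_smul_const, intervalIntegral.integral_smul_const,
    intervalIntegral.integral_const_mul, intervalIntegral.integral_const_mul, integral_cos,
    integral_sin]

theorem hasFDerivAt_K2ker_upper_sub_lower :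
    HasFDerivAt (fun z => ((∫ θ in (0 : ℝ)..π, K2ker (z * exp (-(θ : ℂ) * I)))
        - ∫ θ in π..(2 * π), K2ker (z * exp (-(θ : ℂ) * I))) / (2 * π))
      ((4 / π) • imCLM) 0 := by
  simp only [div_eq_mul_inv]
  refine (((hasFDerivAt_integral_K2ker_mul_exp 0 π).sub
    (hasFDerivAt_integral_K2ker_mul_exp π (2 * π))).mul_const (2 * π)⁻¹).congr_fderiv ?_
  ext v
  simp only [Real.sin_zero, Real.sin_pi, Real.sin_two_pi, Real.cos_zero, Real.cos_pi,
    Real.cos_two_pi, sub_self, mul_zero, zero_smul, zero_add, sub_apply,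
    smul_apply, imCLM_apply, smul_eq_mul]
  ring

/-- Sharpness of the bound `‖D_u(0)‖ ≤ 4/π`: the extremal map
`U = K₂[χ_{𝕋⁺} - χ_{𝕋⁻}]` satisfies `U_z(0) = -2i/π`, hence
`|U_z(0)| + |U_{z̄}(0)| = 4/π`. -/
theorem stmt6 (U : ℂ → ℂ)
    (hU : ∀ z : ℂ, ‖z‖ < 1 →
      U z = ((((∫ θ in (0:ℝ)..Real.pi, K2ker (z * Complex.exp (-(θ:ℂ) * Complex.I)))
              - ∫ θ in Real.pi..(2 * Real.pi),
                  K2ker (z * Complex.exp (-(θ:ℂ) * Complex.I)))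
             / (2 * Real.pi) : ℝ) : ℂ)) :
    wderivZ U 0 = -2 * Complex.I / Real.pi
    ∧ ‖wderivZ U 0‖ + ‖wderivZbar U 0‖ = 4 / Real.pi := by
  have hUeq : U =ᶠ[nhds 0] fun z => ((((∫ θ in (0 : ℝ)..π, K2ker (z * exp (-(θ : ℂ) * I)))
      - ∫ θ in π..(2 * π), K2ker (z * exp (-(θ : ℂ) * I))) / (2 * π) : ℝ) : ℂ) :=
    Filter.eventually_of_mem (Metric.ball_mem_nhds 0 one_pos) fun z hz =>
      hU z (mem_ball_zero_iff.mp hz)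
  have hdU := ((ofRealCLM.hasFDerivAt.comp 0 hasFDerivAt_K2ker_upper_sub_lower)
    |>.congr_of_eventuallyEq hUeq).fderiv
  have hπ : (π : ℂ) ≠ 0 := ofReal_ne_zero.mpr pi_ne_zero
  have hdU_one : fderiv ℝ U 0 1 = 0 := by simp [hdU]
  have hdU_I : fderiv ℝ U 0 I = 4 / π := by simp [hdU]
  have hz : wderivZ U 0 = -2 * I / π := by
    rw [wderivZ, hdU_one, hdU_I]
    field_simp
    ring
  have hzbar : wderivZbar U 0 = 2 * I / π := by
    rw [wderivZbar, hdU_one, hdU_I]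
    field_simp
    ring
  refine ⟨hz, ?_⟩
  rw [hz, hzbar]
  norm_num [abs_of_pos pi_pos, ← add_div]
end

section
/- Let M > 0 and let u : 𝔻 → ℂ be given for all z ∈ 𝔻 by the absolutely convergent series u(z) = Σ_{k=0}^∞ c_k·(1 - ((k-1)/(k+1))·|z|²)·z^k + Σ_{k=1}^∞ c_{-k}·(1 - ((k-1)/(k+1))·|z|²)·z̄^k (the homogeneous expansion of a T₂-harmonic function), where the complex coefficients satisfy limsup_{|k|→∞} |c_k|^{1/|k|} ≤ 1. If sup_{z∈𝔻} |u(z)| ≤ M, then for every k ≥ 1, |c_k| + |c_{-k}| ≤ (2M/π)·(k+1). -/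
/-!
On a circle `|z| = r < 1` the expansion of `u` is an absolutely convergent Fourier series in `θ`
whose coefficients of index `±k` are `c_{±k} F_k(r²) r^k`, where `F_k(w) = 1 - (k-1)/(k+1) w`.
With `α, β` the arguments of `c_k, c_{-k}`, integrating `u(re^{iθ})` against
`e^{-i(kθ+α)} + e^{i(kθ-β)}` returns `2π F_k(r²) r^k (|c_k| + |c_{-k}|)`; that weight has modulus
`2|cos(kθ + (α-β)/2)|`, whose integral over a period is `8`, so the left side is at most `8M`.
Letting `r → 1`, where `F_k(1) = 2/(k+1)`, gives the estimate.
-/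

open Real MeasureTheory

open Complex (I)

theorem integral_exp_int_mul_I (m : ℤ) :
    ∫ θ in (0:ℝ)..2 * π, Complex.exp (m * θ * I) = if m = 0 then ((2 * π : ℝ) : ℂ) else 0 := by
  split_ifs with hm
  · simp [hm]
  have hmI : (m : ℂ) * I ≠ 0 := by simp [hm]
  have hperiod : Complex.exp (m * I * ((2 * π : ℝ) : ℂ)) = 1 := by
    rw [← Complex.exp_int_mul_two_pi_mul_I m]; push_cast; ring_nf
  simp_rw [mul_right_comm _ _ I]
  rw [integral_exp_mul_complex hmI, hperiod]
  simp

theorem integral_tsum_mul_exp_neg {d : ℤ → ℂ} (hd : Summable (‖d ·‖)) (j : ℤ) :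
    ∫ θ in (0:ℝ)..2 * π, (∑' m, d m * Complex.exp (m * θ * I)) * Complex.exp (-(j * θ * I))
      = 2 * π * d j := by
  set F : ℤ → ℝ → ℂ := fun m θ => d m * Complex.exp (m * θ * I) * Complex.exp (-(j * θ * I))
  have hterm (m : ℤ) : ∫ θ in (0:ℝ)..2 * π, F m θ = if m = j then 2 * π * d j else 0 := by
    have hmul : ∀ θ : ℝ, F m θ = d m * Complex.exp (((m - j : ℤ) : ℂ) * θ * I) := by
      intro θ; simp only [F]; rw [mul_assoc, ← Complex.exp_add]; push_cast; ring_nf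
    simp_rw [hmul, intervalIntegral.integral_const_mul, integral_exp_int_mul_I, sub_eq_zero]
    split_ifs with h
    · subst h; push_cast; ring
    · simp
  have hnorm (m : ℤ) (θ : ℝ) : ‖F m θ‖ = ‖d m‖ := by simp [F, Complex.norm_exp]
  have hpoint (θ : ℝ) : HasSum (F · θ)
      ((∑' m, d m * Complex.exp (m * θ * I)) * Complex.exp (-(j * θ * I))) := by
    have hs : Summable fun m : ℤ => d m * Complex.exp (m * θ * I) :=
      .of_norm (by simpa [Complex.norm_exp] using hd)
    exact hs.hasSum.mul_right _
  have hsum : HasSum (fun m => ∫ θ in (0:ℝ)..2 * π, F m θ) (∫ θ in (0:ℝ)..2 * π,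
      (∑' m, d m * Complex.exp (m * θ * I)) * Complex.exp (-(j * θ * I))) :=
    intervalIntegral.hasSum_integral_of_dominated_convergence
      (fun m _ => ‖d m‖) (fun m => (by fun_prop : Continuous (F m)).aestronglyMeasurable)
      (fun m => .of_forall fun θ _ => (hnorm m θ).le)
      (.of_forall fun _ _ => hd) intervalIntegrable_const (.of_forall fun θ _ => hpoint θ)
  simp_rw [hterm] at hsum
  exact hsum.unique (hasSum_ite_eq j _)

theorem integral_abs_cos_mul_add (k : ℕ) (hk : k ≠ 0) (b : ℝ) :
    ∫ θ in (0:ℝ)..2 * π, |cos (k * θ + b)| = 4 := by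
  have hper : Function.Periodic (fun x => |cos x|) π := fun x => by simp [cos_add_pi]
  have hintegrable (t₁ t₂ : ℝ) : IntervalIntegrable (fun x => |cos x|) volume t₁ t₂ :=
    continuous_cos.abs.intervalIntegrable _ _
  have half_period : ∫ x in (0:ℝ)..π, |cos x| = 2 := by
    have hcos : Set.EqOn (fun x => |cos x|) cos (Set.uIcc (-(π / 2)) (-(π / 2) + π)) := by
      intro x hx
      rw [Set.uIcc_of_le (by linarith [pi_pos])] at hx
      exact abs_of_nonneg (cos_nonneg_of_mem_Icc ⟨hx.1, by linarith [hx.2]⟩)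
    rw [← zero_add π, ← hper.intervalIntegral_add_eq (-(π / 2)) 0,
      intervalIntegral.integral_congr hcos, integral_cos, show -(π / 2) + π = π / 2 by ring, sin_neg, sin_pi_div_two]
    norm_num
  have hk' : (k : ℝ) ≠ 0 := by exact_mod_cast hk
  rw [intervalIntegral.integral_comp_mul_add (fun x => |cos x|) hk',
    mul_zero, zero_add, show (k : ℝ) * (2 * π) + b = b + (2 * k : ℤ) • π by simp; ring,
    hper.intervalIntegral_add_zsmul_eq _ b hintegrable,
    hper.intervalIntegral_add_eq b 0, zero_add, half_period]
  simp only [zsmul_eq_mul, smul_eq_mul, Int.cast_mul, Int.cast_ofNat, Int.cast_natCast]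
  field_simp
  ring

theorem norm_exp_neg_add_exp (x y : ℝ) :
    ‖Complex.exp (-(x * I)) + Complex.exp (y * I)‖ = 2 * |cos ((x + y) / 2)| := by
  have hfactor : Complex.exp (-(x * I)) + Complex.exp (y * I)
      = Complex.exp (((y - x) / 2 : ℝ) * I) * (2 * Complex.cos ((x + y) / 2 : ℝ)) := by
    rw [Complex.two_cos, mul_add, ← Complex.exp_add, ← Complex.exp_add]
    push_cast; ring_nf
  rw [hfactor, norm_mul, Complex.norm_exp_ofReal_mul_I, one_mul, norm_mul, ← Complex.ofReal_cos,
    Complex.norm_real, Real.norm_eq_abs]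
  norm_num

theorem exp_neg_arg_mul_I_mul (x : ℂ) : Complex.exp (-(x.arg * I)) * x = ‖x‖ := by
  calc Complex.exp (-(x.arg * I)) * x
      = Complex.exp (-(x.arg * I)) * (‖x‖ * Complex.exp (x.arg * I)) := by
        rw [Complex.norm_mul_exp_arg_mul_I]
    _ = ‖x‖ := by rw [mul_left_comm, ← Complex.exp_add, neg_add_cancel, Complex.exp_zero, mul_one]

theorem norm_add_norm_neg_le_of_norm_tsum_le {d : ℤ → ℂ} (hd : Summable (‖d ·‖)) {M : ℝ}
    (hM : ∀ θ : ℝ, ‖∑' m, d m * Complex.exp (m * θ * I)‖ ≤ M) {k : ℕ} (hk : k ≠ 0) :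
    ‖d k‖ + ‖d (-k)‖ ≤ 4 * M / π := by
  set g : ℝ → ℂ := fun θ => ∑' m, d m * Complex.exp (m * θ * I)
  have hg : Continuous g :=
    continuous_tsum (fun m => by fun_prop) hd (fun m θ => by simp [Complex.norm_exp])
  set α := (d k).arg
  set β := (d (-k)).arg
  have hpair : ((2 * π * (‖d k‖ + ‖d (-k)‖) : ℝ) : ℂ) = ∫ θ in (0:ℝ)..2 * π,
      g θ * (Complex.exp (-(((k * θ + α : ℝ) : ℂ) * I))
        + Complex.exp (((k * θ - β : ℝ) : ℂ) * I)) := by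
    have hsplit : ∀ θ : ℝ, g θ * (Complex.exp (-(((k * θ + α : ℝ) : ℂ) * I))
        + Complex.exp (((k * θ - β : ℝ) : ℂ) * I))
        = Complex.exp (-(α * I)) * (g θ * Complex.exp (-((k : ℤ) * θ * I)))
          + Complex.exp (-(β * I)) * (g θ * Complex.exp (-((-k : ℤ) * θ * I))) := by
      intro θ
      simp only [← Complex.exp_add, mul_add, mul_left_comm _ (g θ)]
      push_cast; ring_nf
    simp_rw [hsplit]
    rw [intervalIntegral.integral_add
      ((by fun_prop : Continuous _).intervalIntegrable _ _)
      ((by fun_prop : Continuous _).intervalIntegrable _ _),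
      intervalIntegral.integral_const_mul, intervalIntegral.integral_const_mul,
      integral_tsum_mul_exp_neg hd, integral_tsum_mul_exp_neg hd,
      mul_left_comm, exp_neg_arg_mul_I_mul, mul_left_comm, exp_neg_arg_mul_I_mul]
    push_cast; ring
  have hbound : ‖∫ θ in (0:ℝ)..2 * π,
      g θ * (Complex.exp (-(((k * θ + α : ℝ) : ℂ) * I))
        + Complex.exp (((k * θ - β : ℝ) : ℂ) * I))‖ ≤ 8 * M := by
    calc _ ≤ ∫ θ in (0:ℝ)..2 * π, M * (2 * |cos (k * θ + (α - β) / 2)|) := by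
          refine intervalIntegral.norm_integral_le_of_norm_le two_pi_pos.le
            (.of_forall fun θ _ => ?_) ((by fun_prop : Continuous _).intervalIntegrable _ _)
          rw [norm_mul, norm_exp_neg_add_exp, show (k * θ + α + (k * θ - β)) / 2
            = k * θ + (α - β) / 2 by ring]
          exact mul_le_mul_of_nonneg_right (hM θ) (by positivity)
      _ = 8 * M := by
          rw [intervalIntegral.integral_const_mul, intervalIntegral.integral_const_mul,
            integral_abs_cos_mul_add k hk]
          ring
  rw [← hpair, Complex.norm_real, Real.norm_of_nonneg (by positivity)] at hbound
  rw [le_div_iff₀ pi_pos]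
  linarith

open ComplexConjugate

/-- The `m`-th term `c_m F(-1,|m|-1;|m|+1;|z|²) z^m` (`z̄^{|m|}` for `m < 0`) of a `T₂`-harmonic
expansion. -/
noncomputable def t2HarmonicTerm (c : ℤ → ℂ) (m : ℤ) (z : ℂ) : ℂ :=
  c m * ((1 - ((m.natAbs - 1 : ℝ) / (m.natAbs + 1)) * ‖z‖ ^ 2 : ℝ) : ℂ) *
    if 0 ≤ m then z ^ m.natAbs else conj z ^ m.natAbs

section t2HarmonicTerm

variable (c : ℤ → ℂ) (z : ℂ)

theorem t2HarmonicTerm_natCast (n : ℕ) :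
    t2HarmonicTerm c n z
      = c n * (((1 - (((n:ℝ) - 1) / ((n:ℝ) + 1)) * ‖z‖ ^ 2 : ℝ)) : ℂ) * z ^ n := by
  simp [t2HarmonicTerm]

theorem t2HarmonicTerm_neg_add_one (n : ℕ) :
    t2HarmonicTerm c (-(n + 1)) z
      = c (-(n:ℤ) - 1) * (((1 - ((n:ℝ) / ((n:ℝ) + 2)) * ‖z‖ ^ 2 : ℝ)) : ℂ) * conj z ^ (n + 1) := by
  have hnatAbs : (-(n:ℤ) - 1).natAbs = n + 1 := by omega
  rw [neg_add', t2HarmonicTerm, hnatAbs, if_neg (by omega)]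
  push_cast
  ring_nf

theorem norm_t2HarmonicTerm (m : ℤ) :
    ‖t2HarmonicTerm c m z‖
      = ‖c m‖ * (|1 - ((m.natAbs - 1 : ℝ) / (m.natAbs + 1)) * ‖z‖ ^ 2| * ‖z‖ ^ m.natAbs) := by
  unfold t2HarmonicTerm
  split_ifs <;>
    simp only [norm_mul, norm_pow, Complex.norm_real, Real.norm_eq_abs, Complex.norm_conj,
      mul_assoc]

theorem t2HarmonicTerm_ofReal_mul_exp (r : ℝ) (m : ℤ) (θ : ℝ) :
    t2HarmonicTerm c m (r * Complex.exp (θ * I))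
      = t2HarmonicTerm c m r * Complex.exp (m * θ * I) := by
  have hnorm : ‖(r : ℂ) * Complex.exp (θ * I)‖ = ‖(r : ℂ)‖ := by
    rw [norm_mul, Complex.norm_exp_ofReal_mul_I, mul_one]
  rcases m with n | n
  · rw [Int.ofNat_eq_natCast, t2HarmonicTerm_natCast, t2HarmonicTerm_natCast, hnorm, mul_pow,
      ← Complex.exp_nat_mul]
    push_cast; ring_nf
  · rw [Int.negSucc_eq, t2HarmonicTerm_neg_add_one, t2HarmonicTerm_neg_add_one, hnorm, map_mul,
      Complex.conj_ofReal, ← Complex.exp_conj, mul_pow, ← Complex.exp_nat_mul]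
    simp only [map_mul, Complex.conj_ofReal, Complex.conj_I]
    push_cast; ring_nf

end t2HarmonicTerm

theorem norm_t2HarmonicTerm_add_norm_neg_le {c : ℤ → ℂ} {M : ℝ}
    (hsum : ∀ z : ℂ, ‖z‖ < 1 → Summable (‖t2HarmonicTerm c · z‖))
    (hbd : ∀ z : ℂ, ‖z‖ < 1 → ‖∑' m, t2HarmonicTerm c m z‖ ≤ M)
    {r : ℝ} (hr : ‖(r : ℂ)‖ < 1) {k : ℕ} (hk : k ≠ 0) :
    ‖t2HarmonicTerm c k r‖ + ‖t2HarmonicTerm c (-k) r‖ ≤ 4 * M / π := by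
  refine norm_add_norm_neg_le_of_norm_tsum_le (hsum _ hr) (fun θ => ?_) hk
  have hz : ‖(r : ℂ) * Complex.exp (θ * I)‖ < 1 := by
    rwa [norm_mul, Complex.norm_exp_ofReal_mul_I, mul_one]
  simpa only [t2HarmonicTerm_ofReal_mul_exp] using hbd _ hz

theorem norm_add_norm_neg_le_of_norm_tsum_t2HarmonicTerm_le {c : ℤ → ℂ} {M : ℝ}
    (hsum : ∀ z : ℂ, ‖z‖ < 1 → Summable (‖t2HarmonicTerm c · z‖))
    (hbd : ∀ z : ℂ, ‖z‖ < 1 → ‖∑' m, t2HarmonicTerm c m z‖ ≤ M) {k : ℕ} (hk : k ≠ 0) :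
    ‖c k‖ + ‖c (-k)‖ ≤ 2 * M / π * (k + 1) := by
  have hcircle : ∀ r ∈ Set.Ioo (-1 : ℝ) 1, (‖c k‖ + ‖c (-k)‖) *
      (|1 - ((k - 1 : ℝ) / (k + 1)) * ‖(r : ℂ)‖ ^ 2| * ‖(r : ℂ)‖ ^ k) ≤ 4 * M / π := by
    intro r hr
    have hr1 : ‖(r : ℂ)‖ < 1 := by simpa [abs_lt] using hr
    have hcoeff := norm_t2HarmonicTerm_add_norm_neg_le hsum hbd hr1 hk
    rwa [norm_t2HarmonicTerm, norm_t2HarmonicTerm, Int.natAbs_neg, Int.natAbs_natCast,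
      ← add_mul] at hcoeff
  have hcont : Continuous fun r : ℝ => (‖c k‖ + ‖c (-k)‖) *
      (|1 - ((k - 1 : ℝ) / (k + 1)) * ‖(r : ℂ)‖ ^ 2| * ‖(r : ℂ)‖ ^ k) := by fun_prop
  have hboundary : (‖c k‖ + ‖c (-k)‖) * |1 - ((k - 1 : ℝ) / (k + 1))| ≤ 4 * M / π := by
    simpa using ContinuousWithinAt.closure_le (x := 1)
      (by rw [closure_Ioo (by norm_num)]; norm_num)
      hcont.continuousWithinAt continuousWithinAt_const hcircle
  have hk1 : (1 : ℝ) ≤ k := by exact_mod_cast Nat.one_le_iff_ne_zero.mpr hk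
  have hweight : |1 - ((k - 1 : ℝ) / (k + 1))| = 2 / (k + 1) := by
    rw [abs_of_nonneg (sub_nonneg.mpr (div_le_one_of_le₀ (by linarith) (by positivity)))]
    field_simp
    ring
  rw [hweight] at hboundary
  calc ‖c k‖ + ‖c (-k)‖ = (‖c k‖ + ‖c (-k)‖) * (2 / (k + 1)) * ((k + 1) / 2) := by field_simp
    _ ≤ 4 * M / π * ((k + 1) / 2) := by gcongr
    _ = 2 * M / π * (k + 1) := by ring

theorem stmt7_general (M : ℝ) (u : ℂ → ℂ) (c : ℤ → ℂ)
    (hsum1 : ∀ z : ℂ, ‖z‖ < 1 → Summable (fun k : ℕ =>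
        ‖c (k:ℤ) *
          (((1 - (((k:ℝ) - 1) / ((k:ℝ) + 1)) * ‖z‖ ^ 2 : ℝ)) : ℂ) * z ^ k‖))
    (hsum2 : ∀ z : ℂ, ‖z‖ < 1 → Summable (fun k : ℕ =>
        ‖c (-(k:ℤ) - 1) *
          (((1 - ((k:ℝ) / ((k:ℝ) + 2)) * ‖z‖ ^ 2 : ℝ)) : ℂ) *
            (starRingEnd ℂ z) ^ (k + 1)‖))
    (hu : ∀ z : ℂ, ‖z‖ < 1 →
      u z = (∑' k : ℕ, c (k:ℤ) *
              (((1 - (((k:ℝ) - 1) / ((k:ℝ) + 1)) * ‖z‖ ^ 2 : ℝ)) : ℂ) * z ^ k)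
          + ∑' k : ℕ, c (-(k:ℤ) - 1) *
              (((1 - ((k:ℝ) / ((k:ℝ) + 2)) * ‖z‖ ^ 2 : ℝ)) : ℂ) *
                (starRingEnd ℂ z) ^ (k + 1))
    (hbd : ∀ z : ℂ, ‖z‖ < 1 → ‖u z‖ ≤ M)
    (k : ℕ) (hk : 1 ≤ k) :
    ‖c (k:ℤ)‖ + ‖c (-(k:ℤ))‖
      ≤ (2 * M / Real.pi) * ((k:ℝ) + 1) := by
  simp_rw [← t2HarmonicTerm_natCast, ← t2HarmonicTerm_neg_add_one] at hsum1 hsum2 hu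
  have hsum (z : ℂ) (hz : ‖z‖ < 1) : Summable (‖t2HarmonicTerm c · z‖) :=
    .of_nat_of_neg_add_one (hsum1 z hz) (hsum2 z hz)
  have hbd_tsum (z : ℂ) (hz : ‖z‖ < 1) : ‖∑' m, t2HarmonicTerm c m z‖ ≤ M := by
    rw [tsum_of_nat_of_neg_add_one (f := (t2HarmonicTerm c · z))
      (hsum1 z hz).of_norm (hsum2 z hz).of_norm, ← hu z hz]
    exact hbd z hz
  exact norm_add_norm_neg_le_of_norm_tsum_t2HarmonicTerm_le hsum hbd_tsum (by omega)

/-- Coefficient estimates for bounded `T₂`-harmonic functions: `|c_k| + |c_{-k}| ≤ (2M/π)(k+1)`. -/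
theorem stmt7 (M : ℝ) (hM : 0 < M) (u : ℂ → ℂ) (c : ℤ → ℂ)
    (hlim : Filter.limsup
        (fun k : ℤ => ‖c k‖ ^ ((1:ℝ) / (k.natAbs : ℝ))) Filter.cofinite ≤ 1)
    (hsum1 : ∀ z : ℂ, ‖z‖ < 1 → Summable (fun k : ℕ =>
        ‖c (k:ℤ) *
          (((1 - (((k:ℝ) - 1) / ((k:ℝ) + 1)) * ‖z‖ ^ 2 : ℝ)) : ℂ) * z ^ k‖))
    (hsum2 : ∀ z : ℂ, ‖z‖ < 1 → Summable (fun k : ℕ =>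
        ‖c (-(k:ℤ) - 1) *
          (((1 - ((k:ℝ) / ((k:ℝ) + 2)) * ‖z‖ ^ 2 : ℝ)) : ℂ) *
            (starRingEnd ℂ z) ^ (k + 1)‖))
    (hu : ∀ z : ℂ, ‖z‖ < 1 →
      u z = (∑' k : ℕ, c (k:ℤ) *
              (((1 - (((k:ℝ) - 1) / ((k:ℝ) + 1)) * ‖z‖ ^ 2 : ℝ)) : ℂ) * z ^ k)
          + ∑' k : ℕ, c (-(k:ℤ) - 1) *
              (((1 - ((k:ℝ) / ((k:ℝ) + 2)) * ‖z‖ ^ 2 : ℝ)) : ℂ) *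
                (starRingEnd ℂ z) ^ (k + 1))
    (hbd : ∀ z : ℂ, ‖z‖ < 1 → ‖u z‖ ≤ M)
    (k : ℕ) (hk : 1 ≤ k) :
    ‖c (k:ℤ)‖ + ‖c (-(k:ℤ))‖
      ≤ (2 * M / Real.pi) * ((k:ℝ) + 1) :=
  stmt7_general M u c hsum1 hsum2 hu hbd k hk
end
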